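/- arXiv:1907.00752 — 2 statements merged into one kernel-verified Lean document; each statement's English description precedes it below -/
import Mathlib

section
/- Let V be a strict weak order on a finite candidate set C with three distinct mutually indifferent maximal candidates a, b, c, and let A be any axis on C. Then there exists a linear extension of V that contains a v-valley with respect to A; hence V is not necessarily single-peaked with respect to any axis. -/
def VValley {C : Type*} (A V : C → C → Prop) : Prop :=
  ∃ c1 c2 c3 : C, A c1 c2 ∧ A c2 c3 ∧ V c1 c2 ∧ V c3 c2

def UValley {C : Type*} (A V : C → C → Prop) : Prop :=
  ∃ a b c d : C, a ≠ b ∧ a ≠ c ∧ a ≠ d ∧ b ≠ c ∧ b ≠ d ∧ c ≠ d ∧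
    A a b ∧ A b d ∧ A a c ∧ A c d ∧ V a b ∧ V d c

def Extends {C : Type*} (V T : C → C → Prop) : Prop :=
  ∀ x y, V x y → T x y

/-- `V` is a strict partial order: asymmetric and transitive. -/
def IsSPO {C : Type*} (V : C → C → Prop) : Prop :=
  (∀ x y, V x y → ¬ V y x) ∧ (∀ x y z, V x y → V y z → V x z)

/-- `V` is a strict weak order: a strict partial order with transitive incomparability. -/
def IsSWO {C : Type*} (V : C → C → Prop) : Prop :=
  IsSPO V ∧ ∀ x y z, (¬ V x y ∧ ¬ V y x) → (¬ V y z ∧ ¬ V z y) → (¬ V x z ∧ ¬ V z x)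

/-- `V` possibly single-peaked w.r.t. axis `A`: it extends to a total order with no v-valley. -/
def PossSP {C : Type*} (A V : C → C → Prop) : Prop :=
  ∃ T : C → C → Prop, IsStrictTotalOrder C T ∧ Extends V T ∧ ¬ VValley A T


/-!
Of the three tied top candidates, let `m` be the one lying between the other two on the axis.
Breaking the ties of `V` by any order that ranks `m` last gives a linear extension of `V` in which
both axis neighbours `p ⊳ m ⊳ q` are preferred to `m`: a v-valley.
-/

section

variable {C : Type*}

def tieBreak (V R : C → C → Prop) (u v : C) : Prop :=
  V u v ∨ (IncompRel V u v ∧ R u v)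

theorem extends_tieBreak (V R : C → C → Prop) : Extends V (tieBreak V R) :=
  fun _ _ => Or.inl

namespace IsSWO

variable {V : C → C → Prop} (hV : IsSWO V)
include hV

theorem trans_incompRel {u v w : C} (huv : V u v) (hvw : IncompRel V v w) : V u w := by
  by_contra huw
  by_cases hwu : V w u
  · exact hvw.2 (hV.1.2 _ _ _ hwu huv)
  · exact (hV.2 u w v ⟨huw, hwu⟩ hvw.symm).1 huv

theorem incompRel_trans {u v w : C} (huv : IncompRel V u v) (hvw : V v w) : V u w := by
  by_contra huw
  by_cases hwu : V w u
  · exact huv.2 (hV.1.2 _ _ _ hvw hwu)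
  · exact (hV.2 v u w huv.symm ⟨huw, hwu⟩).1 hvw

theorem isStrictTotalOrder_tieBreak {R : C → C → Prop} [IsStrictTotalOrder C R] :
    IsStrictTotalOrder C (tieBreak V R) where
  trichotomous u v huv hvu := by
    by_contra hne
    have hincomp : IncompRel V u v := ⟨fun h => huv (Or.inl h), fun h => hvu (Or.inl h)⟩
    rcases trichotomous_of R u v with h | h | h
    · exact huv (Or.inr ⟨hincomp, h⟩)
    · exact hne h
    · exact hvu (Or.inr ⟨hincomp.symm, h⟩)
  irrefl u := by
    rintro (h | ⟨-, h⟩)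
    · exact hV.1.1 u u h h
    · exact irrefl_of R u h
  trans u v w := by
    rintro (huv | ⟨huv, huv'⟩) (hvw | ⟨hvw, hvw'⟩)
    · exact Or.inl (hV.1.2 _ _ _ huv hvw)
    · exact Or.inl (hV.trans_incompRel huv hvw)
    · exact Or.inl (hV.incompRel_trans huv hvw)
    · exact Or.inr ⟨hV.2 u v w huv hvw, _root_.trans_of R huv' hvw'⟩

end IsSWO

theorem exists_isStrictTotalOrder_rel_of_ne (y : C) :
    ∃ R : C → C → Prop, IsStrictTotalOrder C R ∧ ∀ x, x ≠ y → R x y := by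
  classical
  -- `y` is the only point with first coordinate `true`; the second coordinate makes `f` injective.
  let f : C → Lex (Bool × Cardinal) := fun w => toLex (decide (w = y), embeddingToCardinal w)
  have hf : f.Injective := fun u v h => embeddingToCardinal.injective (congrArg Prod.snd h)
  refine ⟨Function.onFun (· < ·) f, hf.isStrictTotalOrder_onFun (r := (· < ·)), fun x hx => ?_⟩
  simp [f, Function.onFun, Prod.Lex.toLex_lt_toLex, hx]

theorem IsSWO.exists_extension_rel_of_incompRel {V : C → C → Prop} (hV : IsSWO V) (y : C) :
    ∃ T : C → C → Prop, IsStrictTotalOrder C T ∧ Extends V T ∧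
      ∀ x, x ≠ y → IncompRel V x y → T x y := by
  obtain ⟨R, hR, hRy⟩ := exists_isStrictTotalOrder_rel_of_ne y
  exact ⟨tieBreak V R, hV.isStrictTotalOrder_tieBreak, extends_tieBreak V R,
    fun x hx hxy => Or.inr ⟨hxy, hRy x hx⟩⟩

theorem IsStrictTotalOrder.exists_between_of_ne {A : C → C → Prop}
    [IsStrictTotalOrder C A] {a b c : C} (hab : a ≠ b) (hac : a ≠ c) (hbc : b ≠ c) :
    ∃ p ∈ ({a, b, c} : Set C), ∃ m ∈ ({a, b, c} : Set C), ∃ q ∈ ({a, b, c} : Set C),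
      A p m ∧ A m q := by
  have tab := trichotomous_of A a b
  have tbc := trichotomous_of A b c
  have tac := trichotomous_of A a c
  have htrans : ∀ x y z, A x y → A y z → A x z := fun _ _ _ => _root_.trans_of A
  grind

end

theorem stmt16_general {C : Type*} (V : C → C → Prop) (hV : IsSWO V)
    (a b c : C) (hab : a ≠ b) (hac : a ≠ c) (hbc : b ≠ c)
    (hmaxa : ∀ x, ¬ V x a) (hmaxb : ∀ x, ¬ V x b) (hmaxc : ∀ x, ¬ V x c) :
    ∀ A : C → C → Prop, IsStrictTotalOrder C A →
      ∃ T : C → C → Prop, IsStrictTotalOrder C T ∧ Extends V T ∧ VValley A T := by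
  intro A hA
  have hmax : ∀ x ∈ ({a, b, c} : Set C), ∀ z, ¬ V z x := by
    rintro x (rfl | rfl | rfl) <;> assumption
  obtain ⟨p, hp, m, hm, q, hq, hpm, hmq⟩ :=
    IsStrictTotalOrder.exists_between_of_ne (A := A) hab hac hbc
  obtain ⟨T, hT, hVT, hTm⟩ := hV.exists_extension_rel_of_incompRel m
  refine ⟨T, hT, hVT, p, m, q, hpm, hmq,
    hTm p (ne_of_irrefl hpm) ?_, hTm q (ne_of_irrefl hmq).symm ?_⟩
  · exact ⟨hmax m hm p, hmax p hp m⟩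
  · exact ⟨hmax m hm q, hmax q hq m⟩

theorem stmt16 {C : Type*} [Fintype C] (V : C → C → Prop) (hV : IsSWO V)
    (a b c : C) (hab : a ≠ b) (hac : a ≠ c) (hbc : b ≠ c)
    (hmaxa : ∀ x, ¬ V x a) (hmaxb : ∀ x, ¬ V x b) (hmaxc : ∀ x, ¬ V x c) :
    ∀ A : C → C → Prop, IsStrictTotalOrder C A →
      ∃ T : C → C → Prop, IsStrictTotalOrder C T ∧ Extends V T ∧ VValley A T :=
  stmt16_general V hV a b c hab hac hbc hmaxa hmaxb hmaxc
end

section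
/- Let P be a profile of strict partial orders on a finite candidate set C that is possibly single-peaked with respect to some axis A. Then the corresponding 2-SAT-style constraint system is satisfiable: setting variable ab to true iff a ⊳ b on A satisfies, for every vote V and all distinct a,b,c with a ≻ b and c ≻ b in V, the clauses (ba ∨ cb) and (ab ∨ bc), and for every distinct pair a,b the constraints (ab ∨ ba) and (¬ab ∨ ¬ba). -/
/- A v-valley in a vote extends to a v-valley in any linear extension of it, so a vote that is
possibly single-peaked has none. Each clause `(ba ∨ cb)` then says exactly that `a ⊳ b ⊳ c` is not
a v-valley, and `(ab ∨ bc)` is the same clause with `a` and `c` exchanged. -/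

theorem VValley.of_extends {C : Type*} {A V T : C → C → Prop} (hVT : Extends V T) :
    VValley A V → VValley A T := by
  rintro ⟨c1, c2, c3, h12, h23, hV12, hV32⟩
  exact ⟨c1, c2, c3, h12, h23, hVT _ _ hV12, hVT _ _ hV32⟩

theorem PossSP.not_vValley {C : Type*} {A V : C → C → Prop} (h : PossSP A V) : ¬ VValley A V := by
  obtain ⟨T, -, hVT, hT⟩ := h
  exact fun hV ↦ hT (hV.of_extends hVT)

theorem rel_or_rel_of_ne {C : Type*} {r : C → C → Prop} [Std.Trichotomous r] {a b : C}
    (h : a ≠ b) : r a b ∨ r b a := by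
  rcases trichotomous_of r a b with hab | rfl | hba
  exacts [.inl hab, absurd rfl h, .inr hba]

theorem rel_or_rel_of_not_vValley {C : Type*} {A V : C → C → Prop} [Std.Trichotomous A]
    (hV : ¬ VValley A V) {a b c : C} (hab : a ≠ b) (hcb : c ≠ b) (hVab : V a b) (hVcb : V c b) :
    A b a ∨ A c b := by
  by_contra! h
  have hAab : A a b := (rel_or_rel_of_ne hab).resolve_right h.1
  have hAbc : A b c := (rel_or_rel_of_ne hcb).resolve_left h.2
  exact hV ⟨a, b, c, hAab, hAbc, hVab, hVcb⟩

theorem stmt18_general {C : Type*} (A : C → C → Prop) (hA : IsStrictTotalOrder C A)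
    (n : ℕ) (V : Fin n → C → C → Prop)
    (hposs : ∀ i, PossSP A (V i)) :
    (∀ i, ∀ a b c : C, a ≠ b → a ≠ c → b ≠ c → V i a b → V i c b →
      (A b a ∨ A c b) ∧ (A a b ∨ A b c)) ∧
    (∀ a b : C, a ≠ b → (A a b ∨ A b a) ∧ ¬ (A a b ∧ A b a)) := by
  refine ⟨fun i a b c hab _ hbc hVab hVcb ↦ ?_, fun a b hab ↦ ?_⟩
  · have hvalley := (hposs i).not_vValley
    exact ⟨rel_or_rel_of_not_vValley hvalley hab hbc.symm hVab hVcb,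
      (rel_or_rel_of_not_vValley hvalley hbc.symm hab hVcb hVab).symm⟩
  · exact ⟨rel_or_rel_of_ne hab, fun h ↦ asymm_of A h.1 h.2⟩

theorem stmt18 {C : Type*} [Fintype C] (A : C → C → Prop) (hA : IsStrictTotalOrder C A)
    (n : ℕ) (V : Fin n → C → C → Prop)
    (hV : ∀ i, IsSPO (V i))
    (hposs : ∀ i, PossSP A (V i)) :
    (∀ i, ∀ a b c : C, a ≠ b → a ≠ c → b ≠ c → V i a b → V i c b →
      (A b a ∨ A c b) ∧ (A a b ∨ A b c)) ∧
    (∀ a b : C, a ≠ b → (A a b ∨ A b a) ∧ ¬ (A a b ∧ A b a)) :=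
  stmt18_general A hA n V hposs
end
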